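/- (Key implication in the proof of Proposition 1.) For each robot i ∈ ι let β_i ≥ 0, λ_i ∈ ℝ, δ_i ∈ ℝ be given, set h_i = |𝒩(i)|·ε/N − ∫_A ρ_{𝒩(i)}² dμ and ḣ_i = −2 ∫_A ρ_{𝒩(i)} · ρ̇_i dμ + λ_i − β_i·h_i. Suppose every robot satisfies its decentralized CBF constraint ḣ_i ≥ δ_i − β_i·h_i, and that the aggregate inequality ∑_{i∈ι} ( 2 ∫_A ρ̇_i · ρ_{𝒩̄(i)} dμ + λ_i ) ≤ β·h + ∑_{i∈ι} δ_i holds, where h = ε − ∫_A ρ² dμ. Then the global CBF condition holds: ḣ = −2 ∑_{i∈ι} ∫_A ρ · ρ̇_i dμ ≥ −β·h. -/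

import Mathlib

/-!
Splitting `ρ = ρ_{𝒩(i)} + ρ_{𝒩̄(i)}` inside each integral `∫_A ρ · ρ̇ᵢ` (legitimate since products of
`L²` functions are integrable), the neighbour part is bounded robot by robot by the decentralized
constraints, which reduce to `-2 ∫_A ρ_{𝒩(i)} ρ̇ᵢ ≥ δᵢ - λᵢ`, and the remaining part summed over all
robots is exactly what the aggregate inequality controls.
-/

open MeasureTheory

lemma integral_sum_mul_eq_add_compl {Ω ι : Type*} [MeasurableSpace Ω] {ν : Measure Ω}
    [Fintype ι] [DecidableEq ι] {ρ : ι → Ω → ℝ} {g : Ω → ℝ}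
    (hρ : ∀ j, MemLp (ρ j) 2 ν) (hg : MemLp g 2 ν) (s : Finset ι) :
    ∫ x, (∑ j, ρ j x) * g x ∂ν
      = ∫ x, (∑ j ∈ s, ρ j x) * g x ∂ν + ∫ x, g x * ∑ j ∈ sᶜ, ρ j x ∂ν := by
  have hs : Integrable (fun x => (∑ j ∈ s, ρ j x) * g x) ν :=
    (memLp_finsetSum s fun j _ => hρ j).integrable_mul hg
  have hsc : Integrable (fun x => g x * ∑ j ∈ sᶜ, ρ j x) ν :=
    hg.integrable_mul (memLp_finsetSum sᶜ fun j _ => hρ j)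
  rw [← integral_add hs hsc]
  congr 1 with x
  rw [← Finset.sum_add_sum_compl s]
  ring

theorem aggregate_inequality_implies_global_cbf_general
    {Ω : Type*} [MeasurableSpace Ω] (μ : Measure Ω) (A : Set Ω)
    {ι : Type*} [Fintype ι] [DecidableEq ι]
    (ρ ρdot : ι → Ω → ℝ)
    (hρ : ∀ i, MemLp (ρ i) 2 (μ.restrict A))
    (hρdot : ∀ i, MemLp (ρdot i) 2 (μ.restrict A))
    (𝒩 : ι → Finset ι)
    (ε β : ℝ)
    (βᵢ lamᵢ δᵢ : ι → ℝ)
    (hᵢ : ι → ℝ)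
    (hᵢdot : ι → ℝ)
    (hhᵢdot : ∀ i, hᵢdot i
        = -2 * (∫ x in A, (∑ j ∈ 𝒩 i, ρ j x) * ρdot i x ∂μ)
            + lamᵢ i - βᵢ i * hᵢ i)
    (hcbfᵢ : ∀ i, hᵢdot i ≥ δᵢ i - βᵢ i * hᵢ i)
    (haggregate :
      ∑ i, (2 * (∫ x in A, ρdot i x * (∑ j ∈ (𝒩 i)ᶜ, ρ j x) ∂μ) + lamᵢ i)
        ≤ β * (ε - ∫ x in A, (∑ j, ρ j x) ^ 2 ∂μ) + ∑ i, δᵢ i) :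
    -2 * ∑ i, ∫ x in A, (∑ j, ρ j x) * ρdot i x ∂μ
      ≥ -β * (ε - ∫ x in A, (∑ j, ρ j x) ^ 2 ∂μ) := by
  have hlocal : ∀ i, δᵢ i - lamᵢ i ≤ -2 * ∫ x in A, (∑ j ∈ 𝒩 i, ρ j x) * ρdot i x ∂μ :=
    fun i => by linarith [hcbfᵢ i, hhᵢdot i]
  have hlocal_sum := Finset.sum_le_sum fun i (_ : i ∈ Finset.univ) => hlocal i
  rw [Finset.sum_sub_distrib, ← Finset.mul_sum] at hlocal_sum
  rw [Finset.sum_add_distrib, ← Finset.mul_sum] at haggregate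
  simp only [fun i => integral_sum_mul_eq_add_compl hρ (hρdot i) (𝒩 i), Finset.sum_add_distrib]
  linarith

/-- Key implication in the proof of Proposition 1: if every robot satisfies
its decentralized CBF constraint `ḣᵢ ≥ δᵢ − βᵢ·hᵢ` and the aggregate
inequality `∑ᵢ (2∫_A ρ̇ᵢ·ρ_{𝒩̄(i)} + lamᵢ) ≤ β·h + ∑ᵢ δᵢ` holds, then the
global CBF condition `ḣ ≥ −β·h` holds. -/
theorem aggregate_inequality_implies_global_cbf
    {Ω : Type*} [MeasurableSpace Ω] (μ : Measure Ω) (A : Set Ω)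
    (hA : MeasurableSet A)
    {ι : Type*} [Fintype ι] [DecidableEq ι] [Nonempty ι]
    (ρ ρdot : ι → Ω → ℝ)
    (hρ : ∀ i, MemLp (ρ i) 2 (μ.restrict A))
    (hρdot : ∀ i, MemLp (ρdot i) 2 (μ.restrict A))
    (𝒩 : ι → Finset ι) (hself : ∀ i, i ∈ 𝒩 i)
    (ε β : ℝ) (hβ : 0 < β)
    (βᵢ lamᵢ δᵢ : ι → ℝ) (hβᵢ : ∀ i, 0 ≤ βᵢ i)
    (hᵢ : ι → ℝ)
    (hhᵢ : ∀ i, hᵢ i = ((𝒩 i).card : ℝ) * ε / (Fintype.card ι : ℝ)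
        - ∫ x in A, (∑ j ∈ 𝒩 i, ρ j x) ^ 2 ∂μ)
    (hᵢdot : ι → ℝ)
    (hhᵢdot : ∀ i, hᵢdot i
        = -2 * (∫ x in A, (∑ j ∈ 𝒩 i, ρ j x) * ρdot i x ∂μ)
            + lamᵢ i - βᵢ i * hᵢ i)
    (hcbfᵢ : ∀ i, hᵢdot i ≥ δᵢ i - βᵢ i * hᵢ i)
    (haggregate :
      ∑ i, (2 * (∫ x in A, ρdot i x * (∑ j ∈ (𝒩 i)ᶜ, ρ j x) ∂μ) + lamᵢ i)
        ≤ β * (ε - ∫ x in A, (∑ j, ρ j x) ^ 2 ∂μ) + ∑ i, δᵢ i) :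
    -2 * ∑ i, ∫ x in A, (∑ j, ρ j x) * ρdot i x ∂μ
      ≥ -β * (ε - ∫ x in A, (∑ j, ρ j x) ^ 2 ∂μ) :=
  aggregate_inequality_implies_global_cbf_general μ A ρ ρdot hρ hρdot 𝒩 ε β βᵢ lamᵢ δᵢ hᵢ hᵢdot
    hhᵢdot hcbfᵢ haggregate
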